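/- Let $m \geq 1$, $j \in [m]$, and $w \in B_m$ a signed permutation. With $\eta_j$ the involution defined via reversing (and negating) the $j$ left-most entries by absolute value, one has $\ell(\eta_j w) = \ell(w) + \sum_{i \in [j], w(i) > 0} i - \sum_{i \in [j], w(i) < 0} i$, where $\ell$ denotes Coxeter length on $B_m$. -/
import Mathlib


/-! Signed permutations of `{±1, …, ±m}` are encoded as functions
`w : Fin m → Fin m × Bool` with injective first components; the value at the
1-based position `k+1` is `±((w k).1 + 1)`, negative iff `(w k).2 = true`. -/

/-- The value `w(k+1) ∈ {±1,…,±m}` of the signed permutation `w` at the 1-based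
position `k+1` (0-based argument `k`); junk `0` out of range. -/
def sval (m : ℕ) (w : Fin m → Fin m × Bool) (k : ℕ) : ℤ :=
  if h : k < m then
    (if (w ⟨k, h⟩).2 then -(((w ⟨k, h⟩).1 : ℕ) + 1 : ℤ) else (((w ⟨k, h⟩).1 : ℕ) + 1 : ℤ))
  else 0

/-- The number of inversions of a signed permutation. -/
def sinv (m : ℕ) (w : Fin m → Fin m × Bool) : ℕ :=
  ((Finset.univ : Finset (Fin m × Fin m)).filter
    (fun p => p.1 < p.2 ∧ sval m w (p.2 : ℕ) < sval m w (p.1 : ℕ))).card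

/-- The number of negative pairs of a signed permutation. -/
def snpr (m : ℕ) (w : Fin m → Fin m × Bool) : ℕ :=
  ((Finset.univ : Finset (Fin m × Fin m)).filter
    (fun p => p.1 ≤ p.2 ∧ sval m w (p.1 : ℕ) + sval m w (p.2 : ℕ) < 0)).card

/-- The Coxeter length `ℓ(w) = inv(w) + npr(w)` on `B_m`. -/
def slen (m : ℕ) (w : Fin m → Fin m × Bool) : ℕ :=
  sinv m w + snpr m w

/-- The order-reversing involution of the finset `S`, extended by the identity
off `S`. -/
def revOn (m : ℕ) (S : Finset (Fin m)) (x : Fin m) : Fin m :=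
  if h : x ∈ S then
    ((S.orderIsoOfFin rfl) (Fin.rev ((S.orderIsoOfFin rfl).symm ⟨x, h⟩)) : Fin m)
  else x

/-- `S_j(w) = {|w(1)|, …, |w(j)|}`, encoded via first components. -/
def Sset (m j : ℕ) (w : Fin m → Fin m × Bool) : Finset (Fin m) :=
  (Finset.univ.filter (fun i : Fin m => (i : ℕ) < j)).image fun i => (w i).1

/-- The involution `η_j` of `B_m`. -/
def eta (m j : ℕ) (w : Fin m → Fin m × Bool) : Fin m → Fin m × Bool :=
  fun i => (revOn m (Sset m j w) (w i).1,
    if (i : ℕ) < j then !(w i).2 else (w i).2)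

/-! ### Auxiliary lemmas -/

section Aux

lemma revOn_mem {m : ℕ} {S : Finset (Fin m)} {x : Fin m} (h : x ∈ S) :
    revOn m S x ∈ S := by
  simp only [revOn, dif_pos h]; exact ((S.orderIsoOfFin rfl) _).2

lemma revOn_notMem {m : ℕ} {S : Finset (Fin m)} {x : Fin m} (h : x ∉ S) :
    revOn m S x = x := by simp only [revOn, dif_neg h]

lemma revOn_revOn {m : ℕ} {S : Finset (Fin m)} {x : Fin m} (h : x ∈ S) :
    revOn m S (revOn m S x) = x := by
  have h2 : revOn m S x ∈ S := revOn_mem h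
  conv_lhs => rw [revOn]
  rw [dif_pos h2]
  have : (⟨revOn m S x, h2⟩ : {y // y ∈ S}) =
      (S.orderIsoOfFin rfl) (Fin.rev ((S.orderIsoOfFin rfl).symm ⟨x, h⟩)) := by
    apply Subtype.ext; simp [revOn, dif_pos h]
  rw [this, OrderIso.symm_apply_apply, Fin.rev_rev, OrderIso.apply_symm_apply]

lemma revOn_lt_iff {m : ℕ} {S : Finset (Fin m)} {x y : Fin m} (hx : x ∈ S) (hy : y ∈ S) :
    revOn m S x < revOn m S y ↔ y < x := by
  simp only [revOn, dif_pos hx, dif_pos hy, Finset.coe_orderIsoOfFin_apply]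
  rw [(S.orderEmbOfFin rfl).lt_iff_lt, Fin.rev_lt_rev, OrderIso.lt_iff_lt,
    Subtype.mk_lt_mk]

lemma revOn_inj {m : ℕ} {S : Finset (Fin m)} {x y : Fin m} (hx : x ∈ S) (hy : y ∈ S)
    (h : revOn m S x = revOn m S y) : x = y := by
  have := revOn_revOn hx; rw [h, revOn_revOn hy] at this; exact this.symm

variable {m j : ℕ} {w : Fin m → Fin m × Bool}

lemma sval_fin (w : Fin m → Fin m × Bool) (i : Fin m) :
    sval m w (i : ℕ) = if (w i).2 then -(((w i).1 : ℕ) + 1 : ℤ) else (((w i).1 : ℕ) + 1 : ℤ) := by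
  rw [sval, dif_pos i.isLt]

lemma sval_ne_zero (w : Fin m → Fin m × Bool) (i : Fin m) : sval m w (i : ℕ) ≠ 0 := by
  rw [sval_fin]; split_ifs <;> omega

lemma abs_sval (w : Fin m → Fin m × Bool) (i : Fin m) :
    |sval m w (i : ℕ)| = (((w i).1 : ℕ) : ℤ) + 1 := by
  rw [sval_fin]; split_ifs with h
  · rw [abs_neg, abs_of_nonneg] <;> omega
  · rw [abs_of_nonneg] <;> omega

lemma pos_sval_iff (w : Fin m → Fin m × Bool) (i : Fin m) :
    0 < sval m w (i : ℕ) ↔ (w i).2 = false := by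
  rw [sval_fin]; rcases h : (w i).2 <;> simp <;> omega

lemma mem_Sset_iff (hw : Function.Injective fun i => (w i).1) (i : Fin m) :
    (w i).1 ∈ Sset m j w ↔ (i : ℕ) < j := by
  simp only [Sset, Finset.mem_image, Finset.mem_filter, Finset.mem_univ, true_and]
  constructor
  · rintro ⟨i', hi', h⟩; rwa [← hw h]
  · intro h; exact ⟨i, h, rfl⟩

lemma sval_eta_of_ge (i : Fin m) (hw : Function.Injective fun i => (w i).1)
    (h : j ≤ (i : ℕ)) : sval m (eta m j w) (i : ℕ) = sval m w (i : ℕ) := by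
  rw [sval_fin, sval_fin]
  have hnm : (w i).1 ∉ Sset m j w := by rw [mem_Sset_iff hw]; omega
  simp only [eta, revOn_notMem hnm, if_neg (by omega : ¬ (i : ℕ) < j)]

lemma abs_sval_eta (i : Fin m) :
    |sval m (eta m j w) (i : ℕ)| =
      (((revOn m (Sset m j w) (w i).1 : Fin m) : ℕ) : ℤ) + 1 := by
  rw [abs_sval]; rfl

lemma sign_flip (i : Fin m) (h : (i : ℕ) < j) :
    0 < sval m w (i : ℕ) ↔ sval m (eta m j w) (i : ℕ) < 0 := by
  rw [pos_sval_iff]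
  have h2 : (eta m j w i).2 = !(w i).2 := by simp [eta, h]
  have habs := abs_sval (eta m j w) i
  have hp := pos_sval_iff (eta m j w) i
  have hnz := sval_ne_zero (eta m j w) i
  rw [h2] at hp
  rcases hb : (w i).2 <;> simp [hb] at hp ⊢ <;> omega

/-- Sums of a function of the first component over the first `j` positions are
invariant under `revOn` of `Sset`. -/
lemma sum_rev (hw : Function.Injective fun i => (w i).1) (G : Fin m → ℤ) :
    ∑ i ∈ Finset.univ.filter (fun i : Fin m => (i : ℕ) < j),
        G (revOn m (Sset m j w) (w i).1)
      = ∑ i ∈ Finset.univ.filter (fun i : Fin m => (i : ℕ) < j), G ((w i).1) := by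
  have h1 : ∀ H : Fin m → ℤ,
      ∑ i ∈ Finset.univ.filter (fun i : Fin m => (i : ℕ) < j), H ((w i).1)
        = ∑ s ∈ Sset m j w, H s := by
    intro H
    rw [Sset, Finset.sum_image]
    intro a _ b _ hab
    exact hw hab
  rw [h1 (fun x => G (revOn m (Sset m j w) x)), h1 G]
  exact Finset.sum_nbij' (revOn m (Sset m j w)) (revOn m (Sset m j w))
    (fun a ha => revOn_mem ha) (fun a ha => revOn_mem ha)
    (fun a ha => revOn_revOn ha) (fun a ha => revOn_revOn ha)
    (fun a _ => rfl)

/-- Per-pair contribution to the length. -/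
def Cc (m : ℕ) (u : Fin m → Fin m × Bool) (i1 i2 : Fin m) : ℤ :=
  (if i1 < i2 ∧ sval m u (i2 : ℕ) < sval m u (i1 : ℕ) then 1 else 0) +
  (if i1 ≤ i2 ∧ sval m u (i1 : ℕ) + sval m u (i2 : ℕ) < 0 then 1 else 0)

lemma slen_eq_sum (u : Fin m → Fin m × Bool) :
    (slen m u : ℤ) = ∑ i2 : Fin m, ∑ i1 : Fin m, Cc m u i1 i2 := by
  have h1 : (sinv m u : ℤ) = ∑ p : Fin m × Fin m,
      (if p.1 < p.2 ∧ sval m u (p.2 : ℕ) < sval m u (p.1 : ℕ) then (1 : ℤ) else 0) := by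
    rw [sinv, Finset.card_filter]; push_cast; rfl
  have h2 : (snpr m u : ℤ) = ∑ p : Fin m × Fin m,
      (if p.1 ≤ p.2 ∧ sval m u (p.1 : ℕ) + sval m u (p.2 : ℕ) < 0 then (1 : ℤ) else 0) := by
    rw [snpr, Finset.card_filter]; push_cast; rfl
  have : (slen m u : ℤ) = ∑ p : Fin m × Fin m, Cc m u p.1 p.2 := by
    rw [slen]; push_cast [← h1, ← h2]
    rw [h1, h2, ← Finset.sum_add_distrib]; rfl
  rw [this, Fintype.sum_prod_type, Finset.sum_comm]

lemma pairstep (a b a' b' : ℤ) (ha : a ≠ 0) (hb : b ≠ 0) (ha' : a' ≠ 0) (hb' : b' ≠ 0)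
    (h1 : 0 < a ↔ a' < 0) (h2 : 0 < b ↔ b' < 0)
    (h3 : |a| < |b| ↔ |b'| < |a'|) (h4 : |a| ≠ |b|) (h5 : |a'| ≠ |b'|) :
    ((if b' < a' then 1 else 0) + (if a' + b' < 0 then 1 else 0) : ℤ) =
      ((if b < a then 1 else 0) + (if a + b < 0 then 1 else 0)) + (if 0 < b then 1 else -1) := by
  rcases abs_cases a with ⟨e1, _⟩ | ⟨e1, _⟩ <;> rcases abs_cases b with ⟨e2, _⟩ | ⟨e2, _⟩ <;>
    rcases abs_cases a' with ⟨e3, _⟩ | ⟨e3, _⟩ <;> rcases abs_cases b' with ⟨e4, _⟩ | ⟨e4, _⟩ <;>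
    rw [e1, e2] at h3 h4 <;> rw [e3, e4] at h3 h5 <;> split_ifs <;> omega

lemma crossval (a b : ℤ) (ha : a ≠ 0) (hb : b ≠ 0) (h4 : |a| ≠ |b|) :
    ((if b < a then 1 else 0) + (if a + b < 0 then 1 else 0) : ℤ) =
      if 0 < b then (if |b| < |a| then 1 else 0) else (1 + if |a| < |b| then 1 else 0) := by
  rcases abs_cases a with ⟨e1, _⟩ | ⟨e1, _⟩ <;> rcases abs_cases b with ⟨e2, _⟩ | ⟨e2, _⟩ <;>
    rw [e1, e2] <;> split_ifs <;> omega

lemma sval_ne_zero' (w : Fin m → Fin m × Bool) (k : ℕ) (hk : k < m) : sval m w k ≠ 0 :=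
  sval_ne_zero w ⟨k, hk⟩

end Aux

/-- the length formula
`ℓ(η_j w) = ℓ(w) + ∑_{i ∈ [j], w(i) > 0} i - ∑_{i ∈ [j], w(i) < 0} i`. -/
theorem stmt3 (m j : ℕ) (hj1 : 1 ≤ j) (hj2 : j ≤ m)
    (w : Fin m → Fin m × Bool) (hw : Function.Injective fun i => (w i).1) :
    (slen m (eta m j w) : ℤ) =
      (slen m w : ℤ) +
        (∑ i ∈ Finset.Icc 1 j, if 0 < sval m w (i - 1) then (i : ℤ) else 0) -
        (∑ i ∈ Finset.Icc 1 j, if sval m w (i - 1) < 0 then (i : ℤ) else 0) := by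
  -- the per-column difference
  have key : ∀ i2 : Fin m,
      ∑ i1 : Fin m, Cc m (eta m j w) i1 i2 = (∑ i1 : Fin m, Cc m w i1 i2) +
        (fun k : ℕ => if k < j then (if 0 < sval m w k then (k : ℤ) + 1
          else -((k : ℤ) + 1)) else 0) (i2 : ℕ) := by
    intro i2
    by_cases h2 : (i2 : ℕ) < j
    · -- column inside the first j positions
      simp only [if_pos h2]
      have hterm : ∀ i1 : Fin m, Cc m (eta m j w) i1 i2 =
          Cc m w i1 i2 + (if i1 ≤ i2 then (if 0 < sval m w (i2 : ℕ) then (1 : ℤ) else -1) else 0) := by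
        intro i1
        by_cases h12 : i1 ≤ i2
        · rw [if_pos h12]
          rcases eq_or_lt_of_le h12 with rfl | hlt
          · -- diagonal
            have hnz := sval_ne_zero w i1
            have hnz' := sval_ne_zero (eta m j w) i1
            have hs := sign_flip (w := w) i1 h2
            simp only [Cc, lt_self_iff_false, false_and, if_false, le_refl, true_and, zero_add]
            split_ifs <;> omega
          · -- strictly above the diagonal, both positions < j
            have h1 : (i1 : ℕ) < j := lt_of_le_of_lt (by exact_mod_cast le_of_lt hlt) h2
            simp only [Cc, hlt, h12, true_and]
            have hne : (w i1).1 ≠ (w i2).1 := fun h => (ne_of_lt hlt) (hw h)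
            have hm1 : (w i1).1 ∈ Sset m j w := (mem_Sset_iff hw i1).2 h1
            have hm2 : (w i2).1 ∈ Sset m j w := (mem_Sset_iff hw i2).2 h2
            refine pairstep _ _ _ _ (sval_ne_zero w i1) (sval_ne_zero w i2)
              (sval_ne_zero (eta m j w) i1) (sval_ne_zero (eta m j w) i2)
              (sign_flip i1 h1) (sign_flip i2 h2) ?_ ?_ ?_
            · rw [abs_sval, abs_sval, abs_sval_eta, abs_sval_eta]
              constructor
              · intro h
                have hv : (w i1).1 < (w i2).1 := by rw [Fin.lt_def]; omega
                have := (revOn_lt_iff (S := Sset m j w) hm2 hm1).2 hv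
                rw [Fin.lt_def] at this; omega
              · intro h
                have hr : revOn m (Sset m j w) (w i2).1 < revOn m (Sset m j w) (w i1).1 := by
                  rw [Fin.lt_def]; omega
                have := (revOn_lt_iff (S := Sset m j w) hm2 hm1).1 hr
                rw [Fin.lt_def] at this; omega
            · rw [abs_sval, abs_sval]
              intro h
              exact hne (Fin.ext (by omega))
            · rw [abs_sval_eta, abs_sval_eta]
              intro h
              exact hne (revOn_inj hm1 hm2 (Fin.ext (by omega)))
        · -- below the diagonal: both contributions vanish
          have h12' : ¬ i1 < i2 := fun h => h12 h.le
          simp [Cc, h12, h12']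
      rw [Finset.sum_congr rfl (fun i1 _ => hterm i1), Finset.sum_add_distrib]
      congr 1
      rw [← Finset.sum_filter, Finset.sum_const]
      have hcard : (Finset.univ.filter (fun i1 : Fin m => i1 ≤ i2)).card = (i2 : ℕ) + 1 := by
        have he : Finset.univ.filter (fun i1 : Fin m => i1 ≤ i2) = Finset.Iic i2 := by
          ext x; simp
        rw [he, Fin.card_Iic]
      rw [hcard, nsmul_eq_mul]
      split_ifs <;> push_cast <;> ring
    · -- column outside the first j positions: no change
      simp only [if_neg h2, add_zero]
      have hj2' : j ≤ (i2 : ℕ) := le_of_not_gt h2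
      have hv2 : sval m (eta m j w) (i2 : ℕ) = sval m w (i2 : ℕ) := sval_eta_of_ge i2 hw hj2'
      rw [← Finset.sum_filter_add_sum_filter_not Finset.univ (fun i1 : Fin m => (i1 : ℕ) < j)
          (fun i1 => Cc m (eta m j w) i1 i2),
        ← Finset.sum_filter_add_sum_filter_not Finset.univ (fun i1 : Fin m => (i1 : ℕ) < j)
          (fun i1 => Cc m w i1 i2)]
      congr 1
      · -- rows < j : use the abs-value invariance
        have hbnz : sval m w (i2 : ℕ) ≠ 0 := sval_ne_zero w i2
        have hmem2 : (w i2).1 ∉ Sset m j w := by rw [mem_Sset_iff hw]; omega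
        have hLc : ∀ i1 ∈ Finset.univ.filter (fun i1 : Fin m => (i1 : ℕ) < j),
            Cc m (eta m j w) i1 i2 =
              (if 0 < sval m w (i2 : ℕ) then
                (if (((w i2).1 : ℕ) : ℤ) + 1 <
                    (((revOn m (Sset m j w) (w i1).1 : Fin m) : ℕ) : ℤ) + 1 then 1 else 0)
              else (1 + if (((revOn m (Sset m j w) (w i1).1 : Fin m) : ℕ) : ℤ) + 1 <
                    (((w i2).1 : ℕ) : ℤ) + 1 then 1 else 0)) := by
          intro i1 hi1
          simp only [Finset.mem_filter, Finset.mem_univ, true_and] at hi1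
          have hlt : i1 < i2 := by rw [Fin.lt_def]; omega
          have hm1 : (w i1).1 ∈ Sset m j w := (mem_Sset_iff hw i1).2 hi1
          have hne : |sval m (eta m j w) (i1 : ℕ)| ≠ |sval m w (i2 : ℕ)| := by
            rw [abs_sval_eta, abs_sval]
            intro h
            exact hmem2 ((Fin.ext (by omega : ((w i2).1 : ℕ) =
              (revOn m (Sset m j w) (w i1).1 : ℕ)) : (w i2).1 = _) ▸ revOn_mem hm1)
          simp only [Cc, hlt, hlt.le, true_and, hv2]
          rw [crossval _ _ (sval_ne_zero (eta m j w) i1) hbnz hne, abs_sval w i2,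
            abs_sval_eta i1]
        have hRc : ∀ i1 ∈ Finset.univ.filter (fun i1 : Fin m => (i1 : ℕ) < j),
            Cc m w i1 i2 =
              (if 0 < sval m w (i2 : ℕ) then
                (if (((w i2).1 : ℕ) : ℤ) + 1 < (((w i1).1 : ℕ) : ℤ) + 1 then 1 else 0)
              else (1 + if (((w i1).1 : ℕ) : ℤ) + 1 <
                    (((w i2).1 : ℕ) : ℤ) + 1 then 1 else 0)) := by
          intro i1 hi1
          simp only [Finset.mem_filter, Finset.mem_univ, true_and] at hi1
          have hlt : i1 < i2 := by rw [Fin.lt_def]; omega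
          have hne12 : (w i1).1 ≠ (w i2).1 := fun h => (ne_of_lt hlt) (hw h)
          have hne : |sval m w (i1 : ℕ)| ≠ |sval m w (i2 : ℕ)| := by
            rw [abs_sval, abs_sval]
            intro h
            exact hne12 (Fin.ext (by omega))
          simp only [Cc, hlt, hlt.le, true_and]
          rw [crossval _ _ (sval_ne_zero w i1) hbnz hne, abs_sval w i2, abs_sval w i1]
        rw [Finset.sum_congr rfl hLc, Finset.sum_congr rfl hRc]
        exact sum_rev hw (fun s => if 0 < sval m w (i2 : ℕ) then
          (if (((w i2).1 : ℕ) : ℤ) + 1 < ((s : ℕ) : ℤ) + 1 then 1 else 0)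
          else (1 + if ((s : ℕ) : ℤ) + 1 < (((w i2).1 : ℕ) : ℤ) + 1 then 1 else 0))
      · -- rows ≥ j : values unchanged
        apply Finset.sum_congr rfl
        intro i1 hi1
        simp only [Finset.mem_filter, Finset.mem_univ, true_and, not_lt] at hi1
        simp only [Cc, sval_eta_of_ge i1 hw hi1, hv2]
  -- assemble
  rw [slen_eq_sum, slen_eq_sum (u := w), Finset.sum_congr rfl (fun i2 _ => key i2),
    Finset.sum_add_distrib]
  have hRHS : (∑ i2 : Fin m, (fun k : ℕ => if k < j then (if 0 < sval m w k then (k : ℤ) + 1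
          else -((k : ℤ) + 1)) else 0) (i2 : ℕ)) =
      (∑ i ∈ Finset.Icc 1 j, if 0 < sval m w (i - 1) then (i : ℤ) else 0) -
      (∑ i ∈ Finset.Icc 1 j, if sval m w (i - 1) < 0 then (i : ℤ) else 0) := by
    rw [Fin.sum_univ_eq_sum_range (fun k : ℕ => if k < j then
      (if 0 < sval m w k then (k : ℤ) + 1 else -((k : ℤ) + 1)) else 0) m]
    have hfil : (Finset.range m).filter (· < j) = Finset.range j := by
      ext x; simp only [Finset.mem_filter, Finset.mem_range]; omega
    rw [← Finset.sum_filter, hfil, ← Finset.sum_sub_distrib]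
    refine (Finset.sum_nbij' (fun n => n - 1) (fun k => k + 1) ?_ ?_ ?_ ?_ ?_).symm
    · intro n hn; simp only [Finset.mem_Icc] at hn; simp only [Finset.mem_range]; omega
    · intro k hk; simp only [Finset.mem_range] at hk; simp only [Finset.mem_Icc]; omega
    · intro n hn; simp only [Finset.mem_Icc] at hn; show n - 1 + 1 = n; omega
    · intro k hk; simp only [Finset.mem_range] at hk; show k + 1 - 1 = k; omega
    · intro n hn
      simp only [Finset.mem_Icc] at hn
      have hnz : sval m w (n - 1) ≠ 0 := sval_ne_zero' w (n - 1) (by omega)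
      have hcast : ((n - 1 : ℕ) : ℤ) = (n : ℤ) - 1 := by omega
      rw [hcast]
      split_ifs <;> push_cast <;> omega
  rw [hRHS]
  ring
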